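/- arXiv:math-ph/0302060 — 3 statements merged into one kernel-verified Lean document; each statement's English description precedes it below -/
import Mathlib

section
/- Let H be a nonnegative self-adjoint operator, P(τ) orthogonal projections, and for t, τ > 0 define S(it, τ) = τ⁻¹(I − P(τ)e^{−itτH}P(τ)). Then S(it, τ) is a bounded operator satisfying Re⟨f, S(it,τ)f⟩ ≥ 0 for every f ∈ ℋ; consequently I + S(it,τ) is invertible with ‖(I + S(it,τ))⁻¹‖ ≤ 1. -/
open scoped InnerProductSpace

/-!
An accretive bounded operator `T` on a Hilbert space satisfies `‖f‖² ≤ Re⟪f, (1 + T) f⟫`, so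
`1 + T` is bounded below by `1`: it is injective with closed range, and any vector orthogonal to
the range is orthogonal to its own image, hence zero. Thus `1 + T` is invertible with
`‖(1 + T)⁻¹‖ ≤ 1`. The operator `S(it, τ) = τ⁻¹ (1 - P U P)` is accretive because `P U P` is a
contraction, `P` being an orthogonal projection and `U` an isometry.
-/

namespace ContinuousLinearMap

variable {𝕜 E : Type*} [RCLike 𝕜] [NormedAddCommGroup E] [InnerProductSpace 𝕜 E]

def IsAccretive (T : E →L[𝕜] E) : Prop := ∀ f : E, 0 ≤ RCLike.re ⟪f, T f⟫_𝕜

lemma isAccretive_one_sub_of_norm_le_one {A : E →L[𝕜] E} (hA : ‖A‖ ≤ 1) :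
    IsAccretive (1 - A) := fun f => by
  have hAf : RCLike.re ⟪f, A f⟫_𝕜 ≤ ‖f‖ ^ 2 :=
    calc RCLike.re ⟪f, A f⟫_𝕜 ≤ ‖f‖ * ‖A f‖ := re_inner_le_norm _ _
      _ ≤ ‖f‖ * ‖f‖ := by gcongr; simpa using A.le_of_opNorm_le hA f
      _ = ‖f‖ ^ 2 := (sq _).symm
  simpa [inner_sub_right, inner_self_eq_norm_sq] using hAf

lemma IsAccretive.ofReal_smul {T : E →L[𝕜] E} (hT : IsAccretive T) {c : ℝ} (hc : 0 ≤ c) :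
    IsAccretive ((c : 𝕜) • T) := fun f => by
  simpa [inner_smul_right] using mul_nonneg hc (hT f)

lemma IsAccretive.norm_sq_le_re_inner_one_add_apply {T : E →L[𝕜] E} (hT : IsAccretive T)
    (f : E) : ‖f‖ ^ 2 ≤ RCLike.re ⟪f, (1 + T) f⟫_𝕜 := by
  simpa [inner_add_right, inner_self_eq_norm_sq] using hT f

lemma IsAccretive.norm_le_norm_one_add_apply {T : E →L[𝕜] E} (hT : IsAccretive T) (f : E) :
    ‖f‖ ≤ ‖(1 + T) f‖ := by
  have hcs := (hT.norm_sq_le_re_inner_one_add_apply f).trans (re_inner_le_norm f ((1 + T) f))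
  nlinarith [norm_nonneg f, norm_nonneg ((1 + T) f)]

lemma IsAccretive.antilipschitz_one_add {T : E →L[𝕜] E} (hT : IsAccretive T) :
    AntilipschitzWith 1 ⇑(1 + T) :=
  (1 + T).antilipschitz_of_bound fun f => by simpa using hT.norm_le_norm_one_add_apply f

lemma IsAccretive.range_one_add_eq_top [CompleteSpace E] {T : E →L[𝕜] E} (hT : IsAccretive T) :
    (1 + T).range = ⊤ := by
  have hclosed : IsClosed ((1 + T).range : Set E) :=
    hT.antilipschitz_one_add.isClosed_range (1 + T).uniformContinuous
  have := hclosed.completeSpace_coe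
  refine Submodule.orthogonal_eq_bot_iff.mp ((Submodule.eq_bot_iff _).mpr fun w hw => ?_)
  have hzero : ⟪w, (1 + T) w⟫_𝕜 = 0 := inner_eq_zero_symm.mp (hw _ ⟨w, rfl⟩)
  have hcoercive := hT.norm_sq_le_re_inner_one_add_apply w
  rw [hzero, map_zero] at hcoercive
  exact norm_eq_zero.mp (by nlinarith [norm_nonneg w])

lemma IsAccretive.exists_inverse_one_add [CompleteSpace E] {T : E →L[𝕜] E}
    (hT : IsAccretive T) : ∃ R : E →L[𝕜] E, (1 + T) * R = 1 ∧ R * (1 + T) = 1 ∧ ‖R‖ ≤ 1 := by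
  obtain ⟨u, hu⟩ := isUnit_iff_bijective.mpr
    ⟨hT.antilipschitz_one_add.injective, LinearMap.range_eq_top.mp hT.range_one_add_eq_top⟩
  refine ⟨↑u⁻¹, hu ▸ u.mul_inv, hu ▸ u.inv_mul, opNorm_le_bound _ zero_le_one fun f => ?_⟩
  have hright : (1 + T) ((↑u⁻¹ : E →L[𝕜] E) f) = f := by
    rw [← hu]; exact congr($(u.mul_inv) f)
  simpa [hright] using hT.norm_le_norm_one_add_apply ((↑u⁻¹ : E →L[𝕜] E) f)

end ContinuousLinearMap

theorem S_accretive_and_resolvent_contraction_general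
    {ℋ : Type*} [NormedAddCommGroup ℋ] [InnerProductSpace ℂ ℋ] [CompleteSpace ℋ]
    (U : ℝ → ℋ →L[ℂ] ℋ)
    (hUiso : ∀ (s : ℝ) (x : ℋ), ‖U s x‖ = ‖x‖)
    (Pτ : ℋ →L[ℂ] ℋ) (hPidem : IsIdempotentElem Pτ) (hPsa : IsSelfAdjoint Pτ)
    (t τ : ℝ) (hτ : 0 < τ)
    (S : ℋ →L[ℂ] ℋ) (hS : S = τ⁻¹ • ((1 : ℋ →L[ℂ] ℋ) - Pτ * U (t * τ) * Pτ)) :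
    (∀ f : ℋ, 0 ≤ (⟪f, S f⟫_ℂ).re) ∧
    ∃ T : ℋ →L[ℂ] ℋ, (1 + S) * T = 1 ∧ T * (1 + S) = 1 ∧ ‖T‖ ≤ 1 := by
  have hP : ‖Pτ‖ ≤ 1 := IsStarProjection.norm_le Pτ ⟨hPidem, hPsa⟩
  have hU : ‖U (t * τ)‖ ≤ 1 :=
    (U (t * τ)).opNorm_le_bound zero_le_one fun x => by rw [hUiso, one_mul]
  have hPUP : ‖Pτ * U (t * τ) * Pτ‖ ≤ 1 := by
    calc ‖Pτ * U (t * τ) * Pτ‖ ≤ ‖Pτ‖ * ‖U (t * τ)‖ * ‖Pτ‖ := norm_mul₃_le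
      _ ≤ 1 * 1 * 1 := by gcongr
      _ = 1 := by norm_num
  have hacc : S.IsAccretive := by
    rw [hS, ← Complex.coe_smul]
    exact (ContinuousLinearMap.isAccretive_one_sub_of_norm_le_one hPUP).ofReal_smul
      (inv_nonneg.mpr hτ.le)
  exact ⟨hacc, hacc.exists_inverse_one_add⟩

/-- for the unitary group `U(s) = e^{−isH}` of a nonnegative self-adjoint
operator, an orthogonal projection `P(τ)` and `t, τ > 0`, the bounded operator
`S(it,τ) = τ⁻¹(I − P(τ)e^{−itτH}P(τ))` is accretive (`Re⟨f, S f⟩ ≥ 0`), and `I + S(it,τ)`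
is boundedly invertible with `‖(I + S(it,τ))⁻¹‖ ≤ 1`. -/
theorem S_accretive_and_resolvent_contraction
    {ℋ : Type*} [NormedAddCommGroup ℋ] [InnerProductSpace ℂ ℋ] [CompleteSpace ℋ]
    (U : ℝ → ℋ →L[ℂ] ℋ)
    (hU0 : U 0 = 1)
    (hUgroup : ∀ s s' : ℝ, U (s + s') = U s * U s')
    (hUiso : ∀ (s : ℝ) (x : ℋ), ‖U s x‖ = ‖x‖)
    (hUcont : ∀ x : ℋ, Continuous fun s : ℝ => U s x)
    (Pτ : ℋ →L[ℂ] ℋ) (hPidem : IsIdempotentElem Pτ) (hPsa : IsSelfAdjoint Pτ)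
    (t τ : ℝ) (ht : 0 < t) (hτ : 0 < τ)
    (S : ℋ →L[ℂ] ℋ) (hS : S = τ⁻¹ • ((1 : ℋ →L[ℂ] ℋ) - Pτ * U (t * τ) * Pτ)) :
    (∀ f : ℋ, 0 ≤ (⟪f, S f⟫_ℂ).re) ∧
    ∃ T : ℋ →L[ℂ] ℋ, (1 + S) * T = 1 ∧ T * (1 + S) = 1 ∧ ‖T‖ ≤ 1 :=
  S_accretive_and_resolvent_contraction_general U hUiso Pτ hPidem hPsa t τ hτ S hS
end

section
/- (Chernoff's √n lemma) Let C be a contraction on a Hilbert space ℋ (‖C‖ ≤ 1). Then for every n ≥ 1 and g ∈ ℋ, ‖Cⁿg − e^{−n(I−C)}g‖ ≤ √n · ‖(I − C)g‖. -/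
/-!
With `p k = e⁻ⁿ nᵏ / k!` the Poisson(n) weights, `e^{-n(I-C)} g = ∑ p k • Cᵏ g` and `∑ p k = 1`, so
`Cⁿ g - e^{-n(I-C)} g = ∑ p k • (Cⁿ g - Cᵏ g)`. Telescoping with `‖C‖ ≤ 1` gives
`‖Cⁿ g - Cᵏ g‖ ≤ |k - n| ‖(I - C) g‖`, and by Cauchy–Schwarz the mean absolute deviation
`∑ p k |k - n|` of the Poisson law is at most the square root of its variance `n`.
-/

open scoped Nat

noncomputable def poissonWeight (x : ℝ) (k : ℕ) : ℝ := Real.exp (-x) * (x ^ k / k !)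

namespace poissonWeight

variable {x : ℝ}

theorem nonneg (hx : 0 ≤ x) (k : ℕ) : 0 ≤ poissonWeight x k := by
  unfold poissonWeight; positivity

theorem succ_mul_succ (x : ℝ) (k : ℕ) :
    (k + 1) * poissonWeight x (k + 1) = x * poissonWeight x k := by
  simp only [poissonWeight, Nat.factorial_succ, Nat.cast_mul, Nat.cast_succ]
  field_simp
  ring

theorem hasSum (x : ℝ) : HasSum (poissonWeight x) 1 := by
  have := (NormedSpace.expSeries_div_hasSum_exp x).mul_left (Real.exp (-x))
  rw [← Real.exp_eq_exp_ℝ, ← Real.exp_add, neg_add_cancel, Real.exp_zero] at this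
  exact this

/-- Stein's identity for the Poisson distribution: `E[N f(N)] = x E[f(N + 1)]`. -/
theorem hasSum_natCast_mul {f : ℕ → ℝ} {s : ℝ}
    (h : HasSum (fun k : ℕ ↦ f (k + 1) * poissonWeight x k) s) :
    HasSum (fun k : ℕ ↦ k * f k * poissonWeight x k) (x * s) := by
  have hshift : HasSum (fun k : ℕ ↦ ((k + 1 : ℕ) : ℝ) * f (k + 1) * poissonWeight x (k + 1))
      (x * s) := by
    refine (h.mul_left x).congr_fun fun k ↦ ?_
    rw [mul_right_comm, Nat.cast_succ, succ_mul_succ]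
    ring
  simpa using (hasSum_nat_add_iff (f := fun k : ℕ ↦ k * f k * poissonWeight x k) 1).mp hshift

theorem hasSum_sq_sub (x : ℝ) :
    HasSum (fun k : ℕ ↦ ((k : ℝ) - x) ^ 2 * poissonWeight x k) x := by
  have hmass := hasSum x
  have hmean : HasSum (fun k : ℕ ↦ (k : ℝ) * poissonWeight x k) x := by
    simpa using hasSum_natCast_mul (f := fun _ ↦ 1) (s := 1) (by simpa using hmass)
  have hcentered : HasSum (fun k : ℕ ↦ ((k : ℝ) - x) * poissonWeight x k) 0 := by
    simpa [sub_mul] using hmean.sub (hmass.mul_left x)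
  have hsecond : HasSum (fun k : ℕ ↦ (k : ℝ) * (k - x) * poissonWeight x k) x := by
    simpa using hasSum_natCast_mul (f := fun k ↦ (k : ℝ) - x) (s := 1)
      (by simpa [add_sub_right_comm, add_mul] using hcentered.add hmass)
  have := hsecond.sub (hcentered.mul_left x)
  rw [mul_zero, sub_zero] at this
  exact this.congr_fun fun k ↦ by ring

theorem exists_hasSum_mul_abs_sub_le_sqrt (hx : 0 ≤ x) :
    ∃ M ≤ √x, HasSum (fun k : ℕ ↦ poissonWeight x k * |(k : ℝ) - x|) M := by
  have hw := nonneg hx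
  obtain ⟨M, -, hM, hsum⟩ := Real.inner_le_Lp_mul_Lq_hasSum_of_nonneg .two_two zero_le_one
    (Real.sqrt_nonneg x) (fun k ↦ Real.sqrt_nonneg (poissonWeight x k))
    (fun k ↦ mul_nonneg (Real.sqrt_nonneg (poissonWeight x k)) (abs_nonneg ((k : ℝ) - x)))
    (by simpa [Real.rpow_two, Real.sq_sqrt (hw _)] using hasSum x)
    (by simpa [Real.rpow_two, mul_pow, Real.sq_sqrt (hw _), Real.sq_sqrt hx, mul_comm]
      using hasSum_sq_sub x)
  refine ⟨M, by simpa using hM, hsum.congr_fun fun k ↦ ?_⟩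
  rw [← mul_assoc, Real.mul_self_sqrt (hw k)]

end poissonWeight

section Contraction

variable {𝕜 E : Type*} [NontriviallyNormedField 𝕜] [SeminormedAddCommGroup E] [NormedSpace 𝕜 E]
  {C : E →L[𝕜] E}

theorem norm_pow_apply_le_of_norm_le_one (hC : ‖C‖ ≤ 1) (k : ℕ) (v : E) : ‖(C ^ k) v‖ ≤ ‖v‖ := by
  induction k generalizing v with
  | zero => simp
  | succ k ih => exact (ih (C v)).trans (C.le_of_opNorm_le hC v |>.trans_eq (one_mul _))

theorem dist_pow_apply_le_of_norm_le_one (hC : ‖C‖ ≤ 1) (v : E) (j k : ℕ) :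
    dist ((C ^ j) v) ((C ^ k) v) ≤ |(j : ℝ) - k| * ‖(1 - C) v‖ := by
  wlog hjk : j ≤ k generalizing j k
  · rw [dist_comm, abs_sub_comm]
    exact this k j (le_of_not_ge hjk)
  have hstep (i : ℕ) : dist ((C ^ i) v) ((C ^ (i + 1)) v) ≤ ‖(1 - C) v‖ := by
    rw [dist_eq_norm, pow_succ, mul_apply_eq_comp, ← map_sub]
    simpa using norm_pow_apply_le_of_norm_le_one hC i ((1 - C) v)
  calc dist ((C ^ j) v) ((C ^ k) v) ≤ ∑ _ ∈ Finset.Ico j k, ‖(1 - C) v‖ :=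
        dist_le_Ico_sum_of_dist_le (f := fun i ↦ (C ^ i) v) hjk fun _ _ ↦ hstep _
    _ = |(j : ℝ) - k| * ‖(1 - C) v‖ := by
        rw [Finset.sum_const, Nat.card_Ico, nsmul_eq_mul, abs_sub_comm,
          abs_of_nonneg (by simpa using hjk), Nat.cast_sub hjk]

end Contraction

section BanachAlgebra

variable {𝕜 A : Type*} [RCLike 𝕜] [NormedRing A] [NormedAlgebra 𝕜 A] [CompleteSpace A]

theorem hasSum_poissonWeight_smul_pow (t : ℝ) (a : A) :
    HasSum (fun k ↦ (poissonWeight t k : 𝕜) • a ^ k) (NormedSpace.exp ((t : 𝕜) • (a - 1))) := by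
  have hsplit : (t : 𝕜) • (a - 1) = (t : 𝕜) • a + algebraMap 𝕜 A (-t : ℝ) := by
    rw [Algebra.algebraMap_eq_smul_one, smul_sub]; push_cast; module
  have hcomm : Commute ((t : 𝕜) • a) (algebraMap 𝕜 A (-t : ℝ)) := (Algebra.commutes _ _).symm
  have hball (y : A) : y ∈ Metric.eball (0 : A) (NormedSpace.expSeries 𝕜 A).radius := by
    simp [NormedSpace.expSeries_radius_eq_top]
  have hexp_scalar : NormedSpace.exp ((-t : ℝ) : 𝕜) = (Real.exp (-t) : 𝕜) := by
    rw [Real.exp_eq_exp_ℝ]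
    exact (NormedSpace.map_exp (algebraMap ℝ 𝕜) RCLike.continuous_ofReal (-t)).symm
  rw [hsplit, NormedSpace.exp_add_of_commute_of_mem_ball (𝕂 := 𝕜) hcomm (hball _) (hball _),
    ← NormedSpace.algebraMap_exp_comm, hexp_scalar, ← Algebra.commutes, ← Algebra.smul_def]
  refine ((NormedSpace.exp_series_hasSum_exp' (𝕂 := 𝕜) ((t : 𝕜) • a)).const_smul
    (Real.exp (-t) : 𝕜)).congr_fun fun k ↦ ?_
  rw [smul_pow, smul_smul, smul_smul, poissonWeight]
  push_cast
  congr 1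
  ring

end BanachAlgebra

theorem chernoff_sqrt_lemma_general
    {ℋ : Type*} [NormedAddCommGroup ℋ] [InnerProductSpace ℂ ℋ] [CompleteSpace ℋ]
    (C : ℋ →L[ℂ] ℋ) (hC : ‖C‖ ≤ 1) (n : ℕ) (g : ℋ) :
    ‖(C ^ n) g - NormedSpace.exp ((n : ℂ) • (C - 1)) g‖ ≤ Real.sqrt n * ‖(1 - C) g‖ := by
  obtain ⟨M, hM, hMsum⟩ := poissonWeight.exists_hasSum_mul_abs_sub_le_sqrt n.cast_nonneg
  have hexp : HasSum (fun k ↦ (poissonWeight n k : ℂ) • (C ^ k) g)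
      (NormedSpace.exp ((n : ℂ) • (C - 1)) g) := by
    simpa using
      (ContinuousLinearMap.apply ℂ ℋ g).hasSum (hasSum_poissonWeight_smul_pow (𝕜 := ℂ) n C)
  have hmass : HasSum (fun k ↦ (poissonWeight n k : ℂ) • (C ^ n) g) ((C ^ n) g) := by
    simpa using ((RCLike.hasSum_ofReal ℂ).mpr (poissonWeight.hasSum n)).smul_const ((C ^ n) g)
  refine ((hmass.sub hexp).norm_le_of_bounded (hMsum.mul_right ‖(1 - C) g‖) fun k ↦ ?_).trans
    (mul_le_mul_of_nonneg_right hM (norm_nonneg _))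
  rw [← smul_sub, norm_smul, Complex.norm_real, Real.norm_of_nonneg
    (poissonWeight.nonneg n.cast_nonneg k), mul_assoc, ← dist_eq_norm, dist_comm]
  exact mul_le_mul_of_nonneg_left (dist_pow_apply_le_of_norm_le_one hC g k n)
    (poissonWeight.nonneg n.cast_nonneg k)

/-- Chernoff's √n lemma: for a contraction `C` on a complex Hilbert space,
`‖Cⁿg − e^{−n(I−C)}g‖ ≤ √n ‖(I − C)g‖` for every `n ≥ 1` and `g`. -/
theorem chernoff_sqrt_lemma
    {ℋ : Type*} [NormedAddCommGroup ℋ] [InnerProductSpace ℂ ℋ] [CompleteSpace ℋ]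
    (C : ℋ →L[ℂ] ℋ) (hC : ‖C‖ ≤ 1) (n : ℕ) (hn : 1 ≤ n) (g : ℋ) :
    ‖(C ^ n) g - NormedSpace.exp ((n : ℂ) • (C - 1)) g‖ ≤ Real.sqrt n * ‖(1 - C) g‖ :=
  chernoff_sqrt_lemma_general C hC n g
end

section
/- Let H be an unbounded nonnegative self-adjoint operator on ℋ. Then there exists a vector u₀ ∈ D[H^{1/2}] \ D[H] with H^{1/2}u₀ ≠ 0, and for the rank-one orthogonal projection P onto span{u₀}, one has HPu = 0 for every u ∈ D[HP] = {u : Pu ∈ D[H]}, while H^{1/2}Pu₀ = H^{1/2}u₀ ≠ 0. In particular, the quadratic form u ↦ ‖H^{1/2}Pu‖² on D[H^{1/2}P] is not the closure of the form u ↦ ⟨Pu, HPu⟩ on D[HP]. -/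
open Filter Topology
open scoped InnerProductSpace

theorem aux_bound (C a b c : ℝ) (hC0 : 0 ≤ C) (ha0 : 0 ≤ a) (hb0 : 0 ≤ b)
    (hc0 : 0 ≤ c) (he : b ^ 2 ≤ a * c) (hx : c ≤ C * (a + b)) :
    c ≤ C * (1 + Real.sqrt (2 * C + C ^ 2)) * a := by
  set K : ℝ := Real.sqrt (2 * C + C ^ 2) with hK
  have hK0 : 0 ≤ K := Real.sqrt_nonneg _
  have hKsq : K ^ 2 = 2 * C + C ^ 2 := Real.sq_sqrt (by nlinarith)
  have hb2 : b ^ 2 ≤ C * a ^ 2 + C * a * b := by nlinarith [mul_le_mul_of_nonneg_left hx ha0]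
  have hbKa : b ≤ K * a := by
    nlinarith [sq_nonneg (C * a - b), sq_nonneg (b + K * a), sq_nonneg (b - K * a),
      mul_nonneg hK0 ha0]
  calc c ≤ C * (a + b) := hx
    _ ≤ C * (a + K * a) := by nlinarith
    _ = C * (1 + K) * a := by ring

/-- if `H` is an unbounded nonnegative self-adjoint operator with square root
`H^{1/2}` (so `D[H] ⊊ D[H^{1/2}]`), then there is `u₀ ∈ D[H^{1/2}] \ D[H]` with
`H^{1/2}u₀ ≠ 0` such that, for the rank-one orthogonal projection `P` onto `span{u₀}`,
`HPu = 0` for every `u ∈ D[HP] = {u : Pu ∈ D[H]}`, while `H^{1/2}Pu₀ = H^{1/2}u₀ ≠ 0`.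
In particular the form `u ↦ ‖H^{1/2}Pu‖²` on `D[H^{1/2}P]` is not the closure of the form
`u ↦ ⟨Pu, HPu⟩` on `D[HP]`. -/
theorem form_not_closure_of_unbounded
    {ℋ : Type*} [NormedAddCommGroup ℋ] [InnerProductSpace ℂ ℋ] [CompleteSpace ℋ]
    (H Hsqrt : ℋ →ₗ.[ℂ] ℋ)
    (hHdense : Dense (H.domain : Set ℋ)) (hSdense : Dense (Hsqrt.domain : Set ℋ))
    (hHsym : ∀ x y : H.domain, ⟪H x, (y : ℋ)⟫_ℂ = ⟪(x : ℋ), H y⟫_ℂ)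
    (hSsym : ∀ x y : Hsqrt.domain, ⟪Hsqrt x, (y : ℋ)⟫_ℂ = ⟪(x : ℋ), Hsqrt y⟫_ℂ)
    (hHpos : ∀ x : H.domain, 0 ≤ (⟪(x : ℋ), H x⟫_ℂ).re)
    (hHclosed : IsClosed (H.graph : Set (ℋ × ℋ)))
    (hSclosed : IsClosed (Hsqrt.graph : Set (ℋ × ℋ)))
    (hHunbounded : ¬ ∃ C : ℝ, ∀ x : H.domain, ‖H x‖ ≤ C * ‖(x : ℋ)‖)
    (hcompdom : ∀ u : ℋ, u ∈ H.domain ↔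
      ∃ h1 : u ∈ Hsqrt.domain, Hsqrt ⟨u, h1⟩ ∈ Hsqrt.domain)
    (hcompval : ∀ (u : ℋ) (hu : u ∈ H.domain) (h1 : u ∈ Hsqrt.domain)
      (h2 : Hsqrt ⟨u, h1⟩ ∈ Hsqrt.domain), H ⟨u, hu⟩ = Hsqrt ⟨Hsqrt ⟨u, h1⟩, h2⟩) :
    ∃ (u₀ : ℋ) (h0 : u₀ ∈ Hsqrt.domain), u₀ ∉ H.domain ∧ Hsqrt ⟨u₀, h0⟩ ≠ 0 ∧
      ∀ P : ℋ →L[ℂ] ℋ, (∀ x : ℋ, P x = (⟪u₀, x⟫_ℂ / (‖u₀‖ ^ 2 : ℝ)) • u₀) →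
        (∀ (u : ℋ) (hu : P u ∈ H.domain), H ⟨P u, hu⟩ = 0) ∧
        (∃ hm : P u₀ ∈ Hsqrt.domain, Hsqrt ⟨P u₀, hm⟩ = Hsqrt ⟨u₀, h0⟩ ∧
          Hsqrt ⟨P u₀, hm⟩ ≠ 0) ∧
        ¬ (∀ (u : ℋ) (hu : P u ∈ Hsqrt.domain), ∃ (v : ℕ → ℋ)
            (hv : ∀ n, P (v n) ∈ H.domain),
            Tendsto v atTop (𝓝 u) ∧
            Tendsto (fun n => ⟪P (v n), H ⟨P (v n), hv n⟩⟫_ℂ) atTop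
              (𝓝 ((‖Hsqrt ⟨P u, hu⟩‖ ^ 2 : ℝ) : ℂ))) := by
  classical
  -- Step 1: there is u₀ ∈ D[Hsqrt] \ D[H]
  have key : ∃ u₀ ∈ Hsqrt.domain, u₀ ∉ H.domain := by
    by_contra hcon
    push_neg at hcon
    -- D[Hsqrt] ⊆ D[H]; derive boundedness of H via closed graph theorem
    haveI : CompleteSpace Hsqrt.graph := hSclosed.completeSpace_coe
    have memdom : ∀ p : Hsqrt.graph, (p : ℋ × ℋ).1 ∈ Hsqrt.domain := by
      intro p
      obtain ⟨y, hy1, _⟩ := Hsqrt.mem_graph_iff.mp p.2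
      exact hy1 ▸ y.2
    have memval : ∀ p : Hsqrt.graph, Hsqrt ⟨(p : ℋ × ℋ).1, memdom p⟩ = (p : ℋ × ℋ).2 := by
      intro p
      obtain ⟨y, hy1, hy2⟩ := Hsqrt.mem_graph_iff.mp p.2
      have : (⟨(p : ℋ × ℋ).1, memdom p⟩ : Hsqrt.domain) = y := Subtype.ext hy1.symm
      rw [this, hy2]
    set T : Hsqrt.graph →ₗ[ℂ] ℋ :=
      { toFun := fun p => H ⟨(p : ℋ × ℋ).1, hcon _ (memdom p)⟩
        map_add' := by
          intro p q
          have heq : (⟨((p + q : Hsqrt.graph) : ℋ × ℋ).1, hcon _ (memdom (p + q))⟩ : H.domain)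
              = ⟨(p : ℋ × ℋ).1, hcon _ (memdom p)⟩ + ⟨(q : ℋ × ℋ).1, hcon _ (memdom q)⟩ :=
            Subtype.ext rfl
          show H ⟨((p + q : Hsqrt.graph) : ℋ × ℋ).1, hcon _ (memdom (p + q))⟩
              = H ⟨(p : ℋ × ℋ).1, hcon _ (memdom p)⟩ + H ⟨(q : ℋ × ℋ).1, hcon _ (memdom q)⟩
          rw [heq, H.map_add]
        map_smul' := by
          intro c p
          have heq : (⟨((c • p : Hsqrt.graph) : ℋ × ℋ).1, hcon _ (memdom (c • p))⟩ : H.domain)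
              = c • ⟨(p : ℋ × ℋ).1, hcon _ (memdom p)⟩ :=
            Subtype.ext rfl
          show H ⟨((c • p : Hsqrt.graph) : ℋ × ℋ).1, hcon _ (memdom (c • p))⟩
              = (RingHom.id ℂ) c • H ⟨(p : ℋ × ℋ).1, hcon _ (memdom p)⟩
          rw [heq, H.map_smul]
          rfl } with hT
    have hTgraph : IsClosed (T.graph : Set (Hsqrt.graph × ℋ)) := by
      have heq : (T.graph : Set (Hsqrt.graph × ℋ)) =
          (fun q : Hsqrt.graph × ℋ => (((q.1 : ℋ × ℋ)).1, q.2)) ⁻¹' (H.graph : Set (ℋ × ℋ)) := by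
        ext q
        simp only [Set.mem_preimage, SetLike.mem_coe, LinearMap.mem_graph_iff,
          LinearPMap.mem_graph_iff]
        constructor
        · intro h
          exact ⟨⟨(q.1 : ℋ × ℋ).1, hcon _ (memdom q.1)⟩, rfl, h.symm⟩
        · rintro ⟨y, hy1, hy2⟩
          have : (⟨(q.1 : ℋ × ℋ).1, hcon _ (memdom q.1)⟩ : H.domain) = y := Subtype.ext hy1.symm
          rw [hT]
          simp only [LinearMap.coe_mk, AddHom.coe_mk]
          rw [this, hy2]
      rw [heq]
      exact hHclosed.preimage ((continuous_fst.subtype_val.fst).prodMk continuous_snd)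
    obtain ⟨C, hC0, hCb⟩ : ∃ C : ℝ, 0 ≤ C ∧ ∀ p : Hsqrt.graph, ‖T p‖ ≤ C * ‖p‖ := by
      have hTcont : Continuous T := T.continuous_of_isClosed_graph hTgraph
      let T' : Hsqrt.graph →L[ℂ] ℋ := ⟨T, hTcont⟩
      exact ⟨‖T'‖, ContinuousLinearMap.opNorm_nonneg T', fun p => T'.le_opNorm p⟩
    clear hTgraph
    -- key bound: for x ∈ D[H], ‖H x‖ ≤ C * (‖x‖ + ‖Hsqrt x‖)
    have hbound : ∀ x : H.domain, ∃ h1 : (x : ℋ) ∈ Hsqrt.domain,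
        ‖H x‖ ≤ C * (‖(x : ℋ)‖ + ‖Hsqrt ⟨(x : ℋ), h1⟩‖) := by
      intro x
      obtain ⟨h1, _⟩ := (hcompdom (x : ℋ)).mp x.2
      refine ⟨h1, ?_⟩
      set p : Hsqrt.graph := ⟨((x : ℋ), Hsqrt ⟨(x : ℋ), h1⟩), Hsqrt.mem_graph ⟨(x : ℋ), h1⟩⟩
      have hval : T p = H x := rfl
      have hle := hCb p
      rw [hval] at hle
      have hpnorm : ‖p‖ ≤ ‖(x : ℋ)‖ + ‖Hsqrt ⟨(x : ℋ), h1⟩‖ := by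
        have hpn : ‖p‖ = max ‖(x : ℋ)‖ ‖Hsqrt ⟨(x : ℋ), h1⟩‖ :=
          Prod.norm_def ((x : ℋ), Hsqrt ⟨(x : ℋ), h1⟩)
        rw [hpn]
        exact max_le (le_add_of_nonneg_right (norm_nonneg _))
          (le_add_of_nonneg_left (norm_nonneg _))
      calc ‖H x‖ ≤ C * ‖p‖ := hle
        _ ≤ C * (‖(x : ℋ)‖ + ‖Hsqrt ⟨(x : ℋ), h1⟩‖) := by
            exact mul_le_mul_of_nonneg_left hpnorm hC0
    -- energy identity: ‖Hsqrt x‖² ≤ ‖x‖ ‖H x‖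
    have henergy : ∀ (x : H.domain) (h1 : (x : ℋ) ∈ Hsqrt.domain),
        ‖Hsqrt ⟨(x : ℋ), h1⟩‖ ^ 2 ≤ ‖(x : ℋ)‖ * ‖H x‖ := by
      intro x h1
      obtain ⟨h1', h2'⟩ := (hcompdom (x : ℋ)).mp x.2
      have hh1 : h1' = h1 := rfl
      subst hh1
      have hid : H x = Hsqrt ⟨Hsqrt ⟨(x : ℋ), h1'⟩, h2'⟩ :=
        hcompval (x : ℋ) x.2 h1' h2' 
      have hinner : ⟪(x : ℋ), H x⟫_ℂ = ⟪Hsqrt ⟨(x : ℋ), h1'⟩, Hsqrt ⟨(x : ℋ), h1'⟩⟫_ℂ := by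
        rw [hid]
        exact (hSsym ⟨(x : ℋ), h1'⟩ ⟨Hsqrt ⟨(x : ℋ), h1'⟩, h2'⟩).symm
      have h1n : (⟪(x : ℋ), H x⟫_ℂ).re = ‖Hsqrt ⟨(x : ℋ), h1'⟩‖ ^ 2 := by
        rw [hinner, inner_self_eq_norm_sq_to_K]; norm_cast
      have h2n : (⟪(x : ℋ), H x⟫_ℂ).re ≤ ‖(x : ℋ)‖ * ‖H x‖ := by
        calc (⟪(x : ℋ), H x⟫_ℂ).re ≤ ‖⟪(x : ℋ), H x⟫_ℂ‖ := Complex.re_le_norm _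
          _ ≤ ‖(x : ℋ)‖ * ‖H x‖ := norm_inner_le_norm _ _
      linarith [h1n ▸ h2n]
    -- combine to get a uniform bound, contradicting unboundedness
    apply hHunbounded
    refine ⟨C * (1 + Real.sqrt (2 * C + C ^ 2)), fun x => ?_⟩
    obtain ⟨h1, hx⟩ := hbound x
    exact aux_bound C ‖(x : ℋ)‖ ‖Hsqrt ⟨(x : ℋ), h1⟩‖ ‖H x‖ hC0 (norm_nonneg _)
      (norm_nonneg _) (norm_nonneg _) (henergy x h1) hx
  obtain ⟨u₀, h0, hnotH⟩ := key
  -- Hsqrt u₀ ≠ 0, else u₀ ∈ D[H]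
  have hS0 : Hsqrt ⟨u₀, h0⟩ ≠ 0 := by
    intro hzero
    apply hnotH
    exact (hcompdom u₀).mpr ⟨h0, hzero ▸ Hsqrt.domain.zero_mem⟩
  have hu0ne : u₀ ≠ 0 := fun h => hnotH (h ▸ H.domain.zero_mem)
  refine ⟨u₀, h0, hnotH, hS0, fun P hP => ?_⟩
  -- (a) H P u = 0 whenever P u ∈ D[H]
  have hHP : ∀ (u : ℋ) (hu : P u ∈ H.domain), H ⟨P u, hu⟩ = 0 := by
    intro u hu
    by_cases hcz : (⟪u₀, u⟫_ℂ / (‖u₀‖ ^ 2 : ℝ)) = 0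
    · have hPu : P u = 0 := by rw [hP u, hcz, zero_smul]
      have : (⟨P u, hu⟩ : H.domain) = 0 := Subtype.ext hPu
      rw [this, H.map_zero]
    · exfalso
      apply hnotH
      have : u₀ = (⟪u₀, u⟫_ℂ / (‖u₀‖ ^ 2 : ℝ))⁻¹ • P u := by
        rw [hP u, smul_smul, inv_mul_cancel₀ hcz, one_smul]
      rw [this]
      exact H.domain.smul_mem _ hu
  -- (b) P u₀ = u₀
  have hPu0 : P u₀ = u₀ := by
    rw [hP u₀]
    have hin : ⟪u₀, u₀⟫_ℂ = ((‖u₀‖ ^ 2 : ℝ) : ℂ) := by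
      rw [inner_self_eq_norm_sq_to_K]; norm_num
    rw [hin, div_self, one_smul]
    · simpa using pow_ne_zero 2 (norm_ne_zero_iff.mpr hu0ne)
  have hm : P u₀ ∈ Hsqrt.domain := hPu0.symm ▸ h0
  have hmv : Hsqrt ⟨P u₀, hm⟩ = Hsqrt ⟨u₀, h0⟩ := by congr 1; exact Subtype.ext hPu0
  refine ⟨hHP, ⟨hm, hmv, hmv ▸ hS0⟩, ?_⟩
  -- (c) the closure property fails at u = u₀
  intro hcl
  obtain ⟨v, hv, _, htend⟩ := hcl u₀ hm
  have hzero : (fun n => ⟪P (v n), H ⟨P (v n), hv n⟩⟫_ℂ) = fun _ => (0 : ℂ) := by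
    funext n
    rw [hHP (v n) (hv n), inner_zero_right]
  rw [hzero] at htend
  have := tendsto_nhds_unique tendsto_const_nhds htend
  have hne : ((‖Hsqrt ⟨P u₀, hm⟩‖ ^ 2 : ℝ) : ℂ) ≠ 0 := by
    simp only [ne_eq, Complex.ofReal_eq_zero]
    exact pow_ne_zero 2 (norm_ne_zero_iff.mpr (by rw [hmv]; exact hS0))
  exact hne this.symm
end
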